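/- Let n ≥ 1 be a natural number and let z₁, z₂ be nonzero complex numbers such that |Arg(z₂/z₁)| ≥ π/(n+1). Then the φ-distance between z₁ and z₂ equals (|z₁|^{n+1} + |z₂|^{n+1})/(n+1), and it is realized by the broken path consisting of the two radii from z₁ to 0 and from 0 to z₂. -/

import Mathlib

/-!
Upper bound: the two radii, traversed with `smoothTransition` as time change so that the path is
C¹ with zero velocity at the origin, have φ-length exactly `(‖z₁‖^(n+1) + ‖z₂‖^(n+1))/(n+1)`.

Lower bound: for a C¹ path `γ`, the path `w = γ^(n+1)` has `‖w'‖ = (n+1) ‖γ‖^n ‖γ'‖`, so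
`(n+1) L_φ(γ)` is the Euclidean length of `w`. If `γ` avoids `0`, its continuous argument turns by
`Arg(z₂/z₁) + 2kπ`, of modulus at least `π/(n+1)` for every `k`, so the argument of `w` turns by at
least `π`. Hence (trivially if `γ` meets `0`) `w` passes through some `w t₁` with
`Re (w t₁ / w 0) ≤ 0` and later through some `w t₂` with `Re (w t₂ / w 1) ≤ 0`. Such points lie at
distance at least `‖w 0‖`, resp. `‖w 1‖`, from the endpoints, so `w` has length at least
`‖w 0‖ + ‖w 1‖`.
-/

open Real Set Filter intervalIntegral Topology

noncomputable def phiLength (n : ℕ) (γ : ℝ → ℂ) (a b : ℝ) : ℝ :=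
  ∫ t in a..b, ‖γ t‖ ^ n * ‖deriv γ t‖

theorem phiLength_comp_const_sub (n : ℕ) (γ : ℝ → ℂ) (c a b : ℝ) :
    phiLength n (fun t => γ (c - t)) a b = phiLength n γ (c - b) (c - a) := by
  simp only [phiLength, deriv_comp_const_sub, norm_neg]
  exact integral_comp_sub_left (fun t => ‖γ t‖ ^ n * ‖deriv γ t‖) c

theorem ContDiff.intervalIntegrable_phiLength {n : ℕ} {γ : ℝ → ℂ} (hγ : ContDiff ℝ 1 γ)
    (a b : ℝ) : IntervalIntegrable (fun t => ‖γ t‖ ^ n * ‖deriv γ t‖) MeasureTheory.volume a b :=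
  ((hγ.continuous.norm.pow n).mul (hγ.continuous_deriv le_rfl).norm).intervalIntegrable a b

theorem phiLength_add_adjacent {n : ℕ} {γ : ℝ → ℂ} (hγ : ContDiff ℝ 1 γ) (a b c : ℝ) :
    phiLength n γ a b + phiLength n γ b c = phiLength n γ a c :=
  integral_add_adjacent_intervals (hγ.intervalIntegrable_phiLength a b)
    (hγ.intervalIntegrable_phiLength b c)

theorem phiLength_ofReal_mul (n : ℕ) (z : ℂ) {u : ℝ → ℝ} (hu : ContDiff ℝ 1 u)
    (hmono : Monotone u) {a b : ℝ} (hab : a ≤ b) (ha : 0 ≤ u a) :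
    phiLength n (fun t => (u t : ℂ) * z) a b =
      ‖z‖ ^ (n + 1) * (u b ^ (n + 1) - u a ^ (n + 1)) / (n + 1) := by
  have hderiv (t : ℝ) : HasDerivAt u (deriv u t) t :=
    (hu.differentiable one_ne_zero t).hasDerivAt
  have hintegrand : EqOn (fun t => ‖(u t : ℂ) * z‖ ^ n * ‖deriv (fun t => (u t : ℂ) * z) t‖)
      (fun t => ‖z‖ ^ (n + 1) * (((fun x => x ^ n) ∘ u) t * deriv u t)) (uIcc a b) := by
    intro t ht
    rw [uIcc_of_le hab] at ht
    dsimp only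
    rw [((hderiv t).ofReal_comp.mul_const z).deriv, norm_mul, norm_mul, Complex.norm_real,
      Complex.norm_real, Real.norm_of_nonneg (ha.trans (hmono ht.1)),
      Real.norm_of_nonneg hmono.deriv_nonneg]
    simp only [Function.comp_apply]
    ring
  rw [phiLength, integral_congr hintegrand, integral_const_mul,
    integral_comp_mul_deriv (fun t _ => hderiv t) (hu.continuous_deriv le_rfl).continuousOn
      (continuous_pow n), integral_pow]
  ring

theorem phiLength_radius (n : ℕ) (z : ℂ) :
    phiLength n (fun t => (t : ℂ) * z) 0 1 = ‖z‖ ^ (n + 1) / (n + 1) := by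
  simpa using phiLength_ofReal_mul n z contDiff_id monotone_id zero_le_one le_rfl

noncomputable def radialBridge (z₁ z₂ : ℂ) (t : ℝ) : ℂ :=
  (smoothTransition (1 - 2 * t) : ℂ) * z₁ + (smoothTransition (2 * t - 1) : ℂ) * z₂

theorem contDiff_radialBridge (z₁ z₂ : ℂ) : ContDiff ℝ 1 (radialBridge z₁ z₂) := by
  have hofReal : ContDiff ℝ 1 fun x : ℝ => (x : ℂ) := Complex.ofRealCLM.contDiff
  unfold radialBridge
  fun_prop

theorem radialBridge_zero (z₁ z₂ : ℂ) : radialBridge z₁ z₂ 0 = z₁ := by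
  simp [radialBridge, smoothTransition.zero_of_nonpos]

theorem radialBridge_one (z₁ z₂ : ℂ) : radialBridge z₁ z₂ 1 = z₂ := by
  norm_num [radialBridge, smoothTransition.zero_of_nonpos]

theorem radialBridge_one_sub (z₁ z₂ : ℂ) (t : ℝ) :
    radialBridge z₁ z₂ (1 - t) = radialBridge z₂ z₁ t := by
  rw [radialBridge, radialBridge, add_comm]
  ring_nf

theorem radialBridge_eventuallyEq {t : ℝ} (z₁ z₂ : ℂ) (ht : 1 / 2 < t) :
    radialBridge z₁ z₂ =ᶠ[𝓝 t] fun s => (smoothTransition (2 * s - 1) : ℂ) * z₂ := by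
  filter_upwards [Ioi_mem_nhds ht] with s hs
  rw [radialBridge, smoothTransition.zero_of_nonpos (by linarith [mem_Ioi.1 hs])]
  simp

theorem phiLength_radialBridge_second_half (n : ℕ) (z₁ z₂ : ℂ) :
    phiLength n (radialBridge z₁ z₂) (1 / 2) 1 = ‖z₂‖ ^ (n + 1) / (n + 1) := by
  have hu : ContDiff ℝ 1 fun s : ℝ => smoothTransition (2 * s - 1) := by fun_prop
  have hmono : Monotone fun s : ℝ => smoothTransition (2 * s - 1) :=
    smoothTransition.monotone.comp fun x y h => by linarith
  have hcongr : EqOn (fun t => ‖radialBridge z₁ z₂ t‖ ^ n * ‖deriv (radialBridge z₁ z₂) t‖)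
      (fun t => ‖(smoothTransition (2 * t - 1) : ℂ) * z₂‖ ^ n *
        ‖deriv (fun s => (smoothTransition (2 * s - 1) : ℂ) * z₂) t‖) (uIoo (1 / 2) 1) := by
    intro t ht
    rw [uIoo_of_le (by norm_num)] at ht
    have h := radialBridge_eventuallyEq z₁ z₂ ht.1
    simp only [h.eq_of_nhds, h.deriv_eq]
  calc phiLength n (radialBridge z₁ z₂) (1 / 2) 1
      = phiLength n (fun s => (smoothTransition (2 * s - 1) : ℂ) * z₂) (1 / 2) 1 :=
        integral_congr_uIoo hcongr
    _ = ‖z₂‖ ^ (n + 1) / (n + 1) := by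
        rw [phiLength_ofReal_mul n z₂ hu hmono (by norm_num) (smoothTransition.nonneg _)]
        norm_num

theorem phiLength_radialBridge (n : ℕ) (z₁ z₂ : ℂ) :
    phiLength n (radialBridge z₁ z₂) 0 1 = (‖z₁‖ ^ (n + 1) + ‖z₂‖ ^ (n + 1)) / (n + 1) := by
  have hfirst : phiLength n (radialBridge z₁ z₂) 0 (1 / 2) = ‖z₁‖ ^ (n + 1) / (n + 1) := by
    have h := phiLength_comp_const_sub n (radialBridge z₂ z₁) 1 0 (1 / 2)
    simp only [radialBridge_one_sub] at h
    rw [h]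
    norm_num [phiLength_radialBridge_second_half]
  rw [← phiLength_add_adjacent (contDiff_radialBridge z₁ z₂) 0 (1 / 2) 1, hfirst,
    phiLength_radialBridge_second_half, add_div]

theorem norm_le_norm_sub_of_re_div_nonpos {u w : ℂ} (h : (u / w).re ≤ 0) : ‖w‖ ≤ ‖u - w‖ := by
  rcases eq_or_ne w 0 with rfl | hw
  · simp
  calc ‖w‖ ≤ ‖w‖ * |(u / w).re - 1| := by
        apply le_mul_of_one_le_right (norm_nonneg w)
        rw [abs_of_nonpos (by linarith)]
        linarith
    _ ≤ ‖w‖ * ‖u / w - 1‖ := by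
        gcongr
        simpa using Complex.abs_re_le_norm (u / w - 1)
    _ = ‖u - w‖ := by
        rw [← norm_mul, mul_sub, mul_div_cancel₀ u hw, mul_one]

theorem ContDiff.norm_sub_le_integral_norm_deriv {E : Type*} [NormedAddCommGroup E]
    [NormedSpace ℝ E] {f : ℝ → E} (hf : ContDiff ℝ 1 f) {a b : ℝ} (hab : a ≤ b) :
    ‖f b - f a‖ ≤ ∫ t in a..b, ‖deriv f t‖ :=
  norm_sub_le_integral_of_norm_deriv_le_of_le hab hf.continuous.continuousOn
    (hf.differentiable one_ne_zero).differentiableOn (Eventually.of_forall fun _ _ => le_rfl)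
    ((hf.continuous_deriv le_rfl).norm.intervalIntegrable a b)

theorem norm_add_norm_le_integral_norm_deriv {f : ℝ → ℂ} (hf : ContDiff ℝ 1 f)
    {a b t₁ t₂ : ℝ} (ht₁ : a ≤ t₁) (ht₁₂ : t₁ ≤ t₂) (ht₂ : t₂ ≤ b)
    (hre₁ : (f t₁ / f a).re ≤ 0) (hre₂ : (f t₂ / f b).re ≤ 0) :
    ‖f a‖ + ‖f b‖ ≤ ∫ t in a..b, ‖deriv f t‖ := by
  have hint (c d : ℝ) : IntervalIntegrable (fun t => ‖deriv f t‖) MeasureTheory.volume c d :=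
    (hf.continuous_deriv le_rfl).norm.intervalIntegrable c d
  have hfirst : ‖f a‖ ≤ ∫ t in a..t₁, ‖deriv f t‖ :=
    (norm_le_norm_sub_of_re_div_nonpos hre₁).trans (hf.norm_sub_le_integral_norm_deriv ht₁)
  have hmiddle : 0 ≤ ∫ t in t₁..t₂, ‖deriv f t‖ :=
    integral_nonneg ht₁₂ fun _ _ => norm_nonneg _
  have hlast : ‖f b‖ ≤ ∫ t in t₂..b, ‖deriv f t‖ := by
    refine (norm_le_norm_sub_of_re_div_nonpos hre₂).trans ?_
    rw [← norm_neg, neg_sub]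
    exact hf.norm_sub_le_integral_norm_deriv ht₂
  rw [← integral_add_adjacent_intervals (hint a t₁) (hint t₁ b),
    ← integral_add_adjacent_intervals (hint t₁ t₂) (hint t₂ b)]
  linarith

theorem integral_norm_deriv_pow_succ (n : ℕ) {γ : ℝ → ℂ} (hγ : ContDiff ℝ 1 γ) (a b : ℝ) :
    ∫ t in a..b, ‖deriv (fun t => γ t ^ (n + 1)) t‖ = (n + 1) * phiLength n γ a b := by
  rw [phiLength, ← intervalIntegral.integral_const_mul]
  refine integral_congr fun t _ => ?_
  rw [(((hγ.differentiable one_ne_zero t).hasDerivAt).fun_pow (n + 1)).deriv]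
  simp only [norm_mul, norm_pow, Complex.norm_natCast, Nat.add_sub_cancel]
  push_cast
  ring

theorem pi_le_mul_abs_im_of_exp_eq {w q : ℂ} (hw : Complex.exp w = q) {m : ℝ} (hm : 1 ≤ m)
    (harg : π / m ≤ |q.arg|) : π ≤ m * |w.im| := by
  have hq : q ≠ 0 := hw ▸ Complex.exp_ne_zero w
  obtain ⟨k, hk⟩ : ∃ k : ℤ, w = Complex.log q + k * (2 * π * Complex.I) := by
    rw [← Complex.exp_eq_exp_iff_exists_int, hw, Complex.exp_log hq]
  have him : w.im = q.arg + k * (2 * π) := by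
    rw [hk]
    simp [Complex.log_im]
  rcases eq_or_ne k 0 with rfl | hk0
  · rw [div_le_iff₀ (by linarith)] at harg
    simpa [him, mul_comm] using harg
  · have hk1 : 1 ≤ |(k : ℝ)| := by exact_mod_cast Int.one_le_abs hk0
    have harg_le : |q.arg| ≤ π := Complex.abs_arg_le_pi q
    have htri : |(k : ℝ) * (2 * π)| - |q.arg| ≤ |w.im| := by
      simpa [him, add_comm] using abs_sub_abs_le_abs_add ((k : ℝ) * (2 * π)) q.arg
    rw [abs_mul, abs_of_pos (by positivity : 0 < 2 * π)] at htri
    nlinarith [pi_pos, abs_nonneg w.im]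

theorem exists_cos_eq_zero_of_pi_le_abs_sub {ψ : ℝ → ℝ} {a b : ℝ} (hab : a ≤ b)
    (hψ : ContinuousOn ψ (Icc a b)) (hπ : π ≤ |ψ b - ψ a|) :
    ∃ t₁ t₂, a ≤ t₁ ∧ t₁ ≤ t₂ ∧ t₂ ≤ b ∧ cos (ψ t₁ - ψ a) = 0 ∧ cos (ψ t₂ - ψ b) = 0 := by
  wlog hpos : π ≤ ψ b - ψ a generalizing ψ
  · have hneg : π ≤ -ψ b - -ψ a := by
      cases abs_cases (ψ b - ψ a) <;> linarith
    obtain ⟨t₁, t₂, ht₁, ht₁₂, ht₂, hcos₁, hcos₂⟩ := this (ψ := fun t => -ψ t) hψ.neg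
      (by rwa [show -ψ b - -ψ a = -(ψ b - ψ a) by ring, abs_neg]) hneg
    refine ⟨t₁, t₂, ht₁, ht₁₂, ht₂, ?_, ?_⟩
    · rw [← hcos₁, ← cos_neg]
      ring_nf
    · rw [← hcos₂, ← cos_neg]
      ring_nf
  obtain ⟨t₁, ht₁, hψt₁⟩ := intermediate_value_Icc hab hψ
    (show ψ a + π / 2 ∈ Icc (ψ a) (ψ b) from ⟨by linarith [pi_pos], by linarith [pi_pos]⟩)
  obtain ⟨t₂, ht₂, hψt₂⟩ := intermediate_value_Icc ht₁.2 (hψ.mono (Icc_subset_Icc ht₁.1 le_rfl))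
    (show ψ b - π / 2 ∈ Icc (ψ t₁) (ψ b) from ⟨by linarith, by linarith [pi_pos]⟩)
  refine ⟨t₁, t₂, ht₁.1, ht₂.1, ht₂.2, ?_, ?_⟩
  · rw [hψt₁, add_sub_cancel_left, cos_pi_div_two]
  · rw [hψt₂, sub_sub_cancel_left, cos_neg, cos_pi_div_two]

theorem exists_continuous_exp_lift {γ : ℝ → ℂ} (hγ : ContinuousOn γ (Icc 0 1))
    (hne : ∀ t ∈ Icc (0 : ℝ) 1, γ t ≠ 0) :
    ∃ H : ℝ → ℂ, Continuous H ∧ H 0 = 0 ∧ ∀ t ∈ Icc (0 : ℝ) 1, γ t = γ 0 * Complex.exp (H t) := by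
  have h0 : γ 0 ≠ 0 := hne 0 (left_mem_Icc.2 zero_le_one)
  let δ : C(unitInterval, {z : ℂ // z ≠ 0}) :=
    ⟨fun t => ⟨γ t / γ 0, div_ne_zero (hne t t.2) h0⟩,
      ((hγ.comp_continuous continuous_subtype_val fun t => t.2).div_const _).subtype_mk _⟩
  obtain ⟨Γ, hΓ, hΓ0⟩ := Complex.isCoveringMap_exp.exists_path_lifts δ 0
    (Subtype.ext (by simp [δ, div_self h0]))
  refine ⟨IccExtend zero_le_one Γ, Γ.continuous.Icc_extend', ?_, fun t ht => ?_⟩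
  · rw [IccExtend_left]
    exact hΓ0
  · have h := congrArg Subtype.val (congrFun hΓ ⟨t, ht⟩)
    simp only [Function.comp_apply, δ, ContinuousMap.coe_mk] at h
    rw [IccExtend_of_mem _ _ ht, h, mul_div_cancel₀ _ h0]

theorem exists_re_pow_div_nonpos {γ : ℝ → ℂ} (hγ : ContinuousOn γ (Icc 0 1)) (n : ℕ)
    (harg : π / (n + 1) ≤ |(γ 1 / γ 0).arg|) :
    ∃ t₁ t₂, 0 ≤ t₁ ∧ t₁ ≤ t₂ ∧ t₂ ≤ 1 ∧ (γ t₁ ^ (n + 1) / γ 0 ^ (n + 1)).re ≤ 0 ∧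
      (γ t₂ ^ (n + 1) / γ 1 ^ (n + 1)).re ≤ 0 := by
  by_cases hzero : ∃ t ∈ Icc (0 : ℝ) 1, γ t = 0
  · obtain ⟨t, ht, hγt⟩ := hzero
    exact ⟨t, t, ht.1, le_rfl, ht.2, by simp [hγt], by simp [hγt]⟩
  push Not at hzero
  obtain ⟨H, hH, hH0, hγH⟩ := exists_continuous_exp_lift hγ hzero
  have h0 : γ 0 ≠ 0 := hzero 0 (left_mem_Icc.2 zero_le_one)
  have hmem1 : (1 : ℝ) ∈ Icc (0 : ℝ) 1 := right_mem_Icc.2 zero_le_one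
  let ψ t := (n + 1 : ℝ) * (H t).im
  have hratio (t s : ℝ) (ht : t ∈ Icc (0 : ℝ) 1) (hs : s ∈ Icc (0 : ℝ) 1) :
      (γ t ^ (n + 1) / γ s ^ (n + 1)).re = exp ((n + 1) * (H t - H s)).re * cos (ψ t - ψ s) := by
    rw [hγH t ht, hγH s hs, mul_pow, mul_pow, mul_div_mul_left _ _ (pow_ne_zero _ h0),
      ← Complex.exp_nat_mul, ← Complex.exp_nat_mul, ← Complex.exp_sub, Complex.exp_re]
    simp [ψ, mul_sub]
  have hexp : Complex.exp (H 1) = γ 1 / γ 0 := by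
    rw [hγH 1 hmem1, mul_div_cancel_left₀ _ h0]
  have hwinding : π ≤ |ψ 1 - ψ 0| := by
    simpa [ψ, hH0, abs_mul, abs_of_pos (by positivity : (0 : ℝ) < n + 1)] using
      pi_le_mul_abs_im_of_exp_eq hexp (m := n + 1) (by simp) harg
  have hψ : Continuous ψ := continuous_const.mul (Complex.continuous_im.comp hH)
  obtain ⟨t₁, t₂, ht₁, ht₁₂, ht₂, hcos₁, hcos₂⟩ :=
    exists_cos_eq_zero_of_pi_le_abs_sub zero_le_one hψ.continuousOn hwinding
  refine ⟨t₁, t₂, ht₁, ht₁₂, ht₂, ?_, ?_⟩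
  · rw [hratio t₁ 0 ⟨ht₁, ht₁₂.trans ht₂⟩ (left_mem_Icc.2 zero_le_one), hcos₁, mul_zero]
  · rw [hratio t₂ 1 ⟨ht₁.trans ht₁₂, ht₂⟩ hmem1, hcos₂, mul_zero]

theorem le_phiLength {n : ℕ} {γ : ℝ → ℂ} (hγ : ContDiff ℝ 1 γ)
    (harg : π / (n + 1) ≤ |(γ 1 / γ 0).arg|) :
    (‖γ 0‖ ^ (n + 1) + ‖γ 1‖ ^ (n + 1)) / (n + 1) ≤ phiLength n γ 0 1 := by
  obtain ⟨t₁, t₂, ht₁, ht₁₂, ht₂, hre₁, hre₂⟩ :=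
    exists_re_pow_div_nonpos hγ.continuous.continuousOn n harg
  have h := norm_add_norm_le_integral_norm_deriv (f := fun t => γ t ^ (n + 1)) (hγ.pow (n + 1))
    ht₁ ht₁₂ ht₂ hre₁ hre₂
  rw [integral_norm_deriv_pow_succ n hγ, norm_pow, norm_pow] at h
  rw [div_le_iff₀ (by positivity)]
  linarith

theorem phi_distance_two_radii_general (n : ℕ) (z₁ z₂ : ℂ)
    (harg : Real.pi / (n + 1) ≤ |Complex.arg (z₂ / z₁)|) :
    sInf {L : ℝ | ∃ γ : ℝ → ℂ, ContDiff ℝ 1 γ ∧ γ 0 = z₁ ∧ γ 1 = z₂ ∧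
        L = ∫ t in (0:ℝ)..1, ‖γ t‖ ^ n * ‖deriv γ t‖} =
      (‖z₁‖ ^ (n + 1) + ‖z₂‖ ^ (n + 1)) / (n + 1) ∧
    (∫ t in (0:ℝ)..1,
        ‖((1 - t : ℝ) : ℂ) * z₁‖ ^ n *
          ‖deriv (fun s : ℝ => ((1 - s : ℝ) : ℂ) * z₁) t‖) +
      (∫ t in (0:ℝ)..1,
        ‖(t : ℂ) * z₂‖ ^ n * ‖deriv (fun s : ℝ => (s : ℂ) * z₂) t‖) =
      (‖z₁‖ ^ (n + 1) + ‖z₂‖ ^ (n + 1)) / (n + 1) := by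
  have hleast : IsLeast {L : ℝ | ∃ γ : ℝ → ℂ, ContDiff ℝ 1 γ ∧ γ 0 = z₁ ∧ γ 1 = z₂ ∧
      L = phiLength n γ 0 1} ((‖z₁‖ ^ (n + 1) + ‖z₂‖ ^ (n + 1)) / (n + 1)) := by
    refine ⟨⟨radialBridge z₁ z₂, contDiff_radialBridge z₁ z₂, radialBridge_zero z₁ z₂,
      radialBridge_one z₁ z₂, (phiLength_radialBridge n z₁ z₂).symm⟩, ?_⟩
    rintro _ ⟨γ, hγ, rfl, rfl, rfl⟩
    exact le_phiLength hγ harg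
  have hreversed : phiLength n (fun t => ((1 - t : ℝ) : ℂ) * z₁) 0 1 = ‖z₁‖ ^ (n + 1) / (n + 1) :=
    (phiLength_comp_const_sub n (fun s : ℝ => (s : ℂ) * z₁) 1 0 1).trans (by
      simpa using phiLength_radius n z₁)
  refine ⟨hleast.csInf_eq, ?_⟩
  rw [add_div, ← hreversed, ← phiLength_radius n z₂]
  rfl

/-- For `n ≥ 1` and nonzero `z₁, z₂` with `|Arg(z₂/z₁)| ≥ π/(n+1)`,
the `φ`-distance between `z₁` and `z₂` equals `(|z₁|^{n+1} + |z₂|^{n+1})/(n+1)`,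
and it is realized by the broken path consisting of the two radii from `z₁` to `0`
and from `0` to `z₂`. -/
theorem phi_distance_two_radii (n : ℕ) (hn : 1 ≤ n) (z₁ z₂ : ℂ)
    (hz₁ : z₁ ≠ 0) (hz₂ : z₂ ≠ 0)
    (harg : Real.pi / (n + 1) ≤ |Complex.arg (z₂ / z₁)|) :
    sInf {L : ℝ | ∃ γ : ℝ → ℂ, ContDiff ℝ 1 γ ∧ γ 0 = z₁ ∧ γ 1 = z₂ ∧
        L = ∫ t in (0:ℝ)..1, ‖γ t‖ ^ n * ‖deriv γ t‖} =
      (‖z₁‖ ^ (n + 1) + ‖z₂‖ ^ (n + 1)) / (n + 1) ∧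
    (∫ t in (0:ℝ)..1,
        ‖((1 - t : ℝ) : ℂ) * z₁‖ ^ n *
          ‖deriv (fun s : ℝ => ((1 - s : ℝ) : ℂ) * z₁) t‖) +
      (∫ t in (0:ℝ)..1,
        ‖(t : ℂ) * z₂‖ ^ n * ‖deriv (fun s : ℝ => (s : ℂ) * z₂) t‖) =
      (‖z₁‖ ^ (n + 1) + ‖z₂‖ ^ (n + 1)) / (n + 1) :=
  phi_distance_two_radii_general n z₁ z₂ harg
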